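/- Let M = D/∑ᵢ D·(zᵢ∂ᵢ + αᵢ) be the cyclic module over the n-th Weyl algebra D, with all αᵢ ∉ {0,−1,−2,...}. Then for each i, multiplication by zᵢ is injective on M. -/

import Mathlib

/-!
The `n`-th Weyl algebra over `ℂ`, realized concretely as the subalgebra of
`ℂ`-linear endomorphisms of the polynomial ring `ℂ[z₁,…,zₙ]` generated by the
multiplication operators `zᵢ` and the partial derivative operators `∂ᵢ`
(these satisfy `[∂ᵢ, zⱼ] = δᵢⱼ`, all other generators commuting).
-/

open MvPolynomial

set_option synthInstance.maxHeartbeats 1000000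
set_option maxHeartbeats 1000000

/-- The multiplication operator `zᵢ`. -/
noncomputable def zEnd (n : ℕ) (i : Fin n) : Module.End ℂ (MvPolynomial (Fin n) ℂ) :=
  LinearMap.mulLeft ℂ (X i)

/-- The partial derivative operator `∂ᵢ`. -/
noncomputable def dEnd (n : ℕ) (i : Fin n) : Module.End ℂ (MvPolynomial (Fin n) ℂ) :=
  (pderiv i).toLinearMap

/-- The `n`-th Weyl algebra `D = ℂ⟨z₁,…,zₙ,∂₁,…,∂ₙ⟩` over `ℂ`. -/
noncomputable def Weyl (n : ℕ) : Subalgebra ℂ (Module.End ℂ (MvPolynomial (Fin n) ℂ)) :=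
  Algebra.adjoin ℂ (Set.range (zEnd n) ∪ Set.range (dEnd n))

noncomputable instance (n : ℕ) : Ring (Weyl n) := inferInstance
noncomputable instance (n : ℕ) : Algebra ℂ (Weyl n) := inferInstance

/-- The generator `zᵢ` as an element of the Weyl algebra. -/
noncomputable def zW (n : ℕ) (i : Fin n) : Weyl n :=
  ⟨zEnd n i, Algebra.subset_adjoin (Or.inl ⟨i, rfl⟩)⟩

/-- The generator `∂ᵢ` as an element of the Weyl algebra. -/
noncomputable def dW (n : ℕ) (i : Fin n) : Weyl n :=
  ⟨dEnd n i, Algebra.subset_adjoin (Or.inr ⟨i, rfl⟩)⟩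

/-!
The map `T ↦ T • z^(-α)` identifies `M` with a space of formal sums `∑ c_m z^(m - α)`, `m ∈ ℤⁿ`,
on which `zᵢ` acts by the injective shift `m ↦ m + eᵢ`. To make this rigorous, use the PBW basis
`z^a ∂^b` of `D` and set `φ(z^a ∂^b) = (-α)_b z^(a - b - α)`, with `(-α)_b` a product of falling
factorials. It intertwines left multiplication by `zᵢ` and `∂ᵢ` with the shift and the derivative,
so its kernel is a left ideal containing every `zᵢ∂ᵢ + αᵢ`. Conversely
`z^(a + eᵢ) ∂^(b + eᵢ) ≡ -(αᵢ + bᵢ) z^a ∂^b` modulo the ideal, so every operator is congruent to a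
combination of `z^a ∂^b` with `a` and `b` disjointly supported. On those `φ` is injective, because
`a - b` determines `(a, b)` and `(-α)_b ≠ 0` by non-resonance. Hence `ker φ` is exactly the ideal,
and `zᵢ d` in the ideal gives `shift (φ d) = 0`, so `d` is in the ideal.
-/

theorem Finsupp.induction_add_single_one {ι : Type*} {motive : (ι →₀ ℕ) → Prop} (f : ι →₀ ℕ)
    (zero : motive 0) (add_single : ∀ i f, motive f → motive (f + Finsupp.single i 1)) :
    motive f := by
  refine Finsupp.induction f zero fun i k g _ hk hg => ?_
  clear hk
  induction k with
  | zero => simpa using hg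
  | succ k ih => rw [Finsupp.single_add, add_right_comm]; exact add_single i _ ih

noncomputable def Finsupp.intCastHom (ι : Type*) : (ι →₀ ℕ) →+ (ι →₀ ℤ) :=
  Finsupp.mapRange.addMonoidHom (Nat.castAddMonoidHom ℤ)

@[simp]
lemma Finsupp.intCastHom_apply {ι : Type*} (a : ι →₀ ℕ) (j : ι) :
    Finsupp.intCastHom ι a j = a j :=
  rfl

lemma Finsupp.intCastHom_single {ι : Type*} (i : ι) (k : ℕ) :
    Finsupp.intCastHom ι (Finsupp.single i k) = Finsupp.single i (k : ℤ) :=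
  Finsupp.mapRange_single (hf := map_zero _)

lemma Finsupp.intCastHom_tsub_single {ι : Type*} {a : ι →₀ ℕ} {i : ι} (h : a i ≠ 0) :
    Finsupp.intCastHom ι (a - Finsupp.single i 1) =
      Finsupp.intCastHom ι a - Finsupp.single i 1 := by
  classical
  ext j
  rcases eq_or_ne j i with rfl | hj
  · simp; omega
  · simp [Finsupp.single_eq_of_ne hj]

open Polynomial in
noncomputable def fallingCoeff {σ R : Type*} [Fintype σ] [CommRing R] (g : σ → R)
    (b : σ →₀ ℕ) : R :=
  ∏ i, (descPochhammer R (b i)).eval (g i)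

section FallingCoeff

open Polynomial

variable {σ R : Type*} [Fintype σ] [CommRing R]

@[simp]
lemma fallingCoeff_zero (g : σ → R) : fallingCoeff g 0 = 1 := by
  simp [fallingCoeff]

lemma fallingCoeff_add_single (g : σ → R) (b : σ →₀ ℕ) (i : σ) :
    fallingCoeff g (b + Finsupp.single i 1) = fallingCoeff g b * (g i - b i) := by
  classical
  rw [fallingCoeff, fallingCoeff, ← Finset.mul_prod_erase _ _ (Finset.mem_univ i),
    ← Finset.mul_prod_erase _ _ (Finset.mem_univ i)]
  have h : ∀ j ∈ Finset.univ.erase i, (b + Finsupp.single i 1 : σ →₀ ℕ) j = b j :=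
    fun j hj => by simp [Finsupp.single_eq_of_ne (Finset.ne_of_mem_erase hj)]
  rw [Finset.prod_congr rfl fun j hj => by rw [h j hj]]
  simp only [Finsupp.add_apply, Finsupp.single_eq_same, descPochhammer_succ_eval]
  ring

lemma fallingCoeff_single (g : σ → R) (i : σ) : fallingCoeff g (Finsupp.single i 1) = g i := by
  simpa using fallingCoeff_add_single g 0 i

lemma fallingCoeff_natCast_of_not_le {t b : σ →₀ ℕ} (h : ¬b ≤ t) :
    fallingCoeff (fun i => (t i : R)) b = 0 := by
  obtain ⟨i, hi⟩ := not_forall.1 (mt Finsupp.le_def.2 h)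
  exact Finset.prod_eq_zero (Finset.mem_univ i) (descPochhammer_eval_coe_nat_of_lt (not_le.1 hi))

lemma fallingCoeff_natCast_self_ne_zero [CharZero R] (t : σ →₀ ℕ) :
    fallingCoeff (fun i => (t i : R)) t ≠ 0 := by
  simp only [fallingCoeff, descPochhammer_eval_eq_descFactorial, Nat.descFactorial_self,
    ← Nat.cast_prod]
  exact Nat.cast_ne_zero.2 (Finset.prod_ne_zero_iff.2 fun i _ => (t i).factorial_ne_zero)

lemma fallingCoeff_neg_ne_zero [IsDomain R] {g : σ → R} (hg : ∀ i, ∀ k : ℕ, g i ≠ -(k : R))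
    (b : σ →₀ ℕ) : fallingCoeff (-g) b ≠ 0 := by
  refine Finset.prod_ne_zero_iff.2 fun i _ h => ?_
  have : (ascPochhammer R (b i)).eval (g i) = 0 := by
    rw [← neg_neg (g i), ascPochhammer_eval_neg_eq_descPochhammer]
    simp [show (descPochhammer R (b i)).eval (-g i) = 0 from h]
  obtain ⟨k, -, hk⟩ := (ascPochhammer_eval_eq_zero_iff _ _).1 this
  exact hg i k (by rw [hk, neg_neg])

end FallingCoeff

/-- The differential operator `z^a ∂^b` on `R[z_σ]`. On `z^t` it gives `(t)_b z^(t + a - b)`;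
when `b ≰ t` the truncated exponent `t + a - b` is junk, but then `(t)_b = 0`. -/
noncomputable def weylMonomial {σ : Type*} [Fintype σ] (R : Type*) [CommRing R]
    (a b : σ →₀ ℕ) : Module.End R (MvPolynomial σ R) :=
  (basisMonomials σ R).constr R fun t =>
    monomial (t + a - b) (fallingCoeff (fun i => (t i : R)) b)

section WeylMonomial

variable {σ R : Type*} [Fintype σ] [CommRing R]

lemma weylMonomial_monomial (a b t : σ →₀ ℕ) (c : R) :
    weylMonomial R a b (monomial t c) =
      monomial (t + a - b) (c * fallingCoeff (fun i => (t i : R)) b) := by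
  have h : (monomial t c : MvPolynomial σ R) = c • basisMonomials σ R t := by
    rw [coe_basisMonomials, smul_monomial, smul_eq_mul, mul_one]
  rw [h, map_smul, weylMonomial, Module.Basis.constr_basis, smul_monomial, smul_eq_mul]

lemma weylMonomial_zero_zero : weylMonomial R (0 : σ →₀ ℕ) 0 = 1 := by
  refine linearMap_ext fun t => LinearMap.ext_ring ?_
  simp [weylMonomial_monomial]

lemma mulLeft_X_mul_weylMonomial (i : σ) (a b : σ →₀ ℕ) :
    LinearMap.mulLeft R (X i) * weylMonomial R a b =
      weylMonomial R (a + Finsupp.single i 1) b := by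
  refine linearMap_ext fun t => LinearMap.ext_ring ?_
  simp only [LinearMap.comp_apply, Module.End.mul_apply, LinearMap.mulLeft_apply,
    weylMonomial_monomial, X, monomial_mul, one_mul]
  by_cases h : b ≤ t
  · congr 2
    ext j
    have := h j
    simp only [Finsupp.coe_add, Finsupp.coe_tsub, Pi.add_apply, Pi.sub_apply]
    omega
  · simp [fallingCoeff_natCast_of_not_le h]

lemma pderiv_mul_weylMonomial (i : σ) (a b : σ →₀ ℕ) :
    (pderiv i).toLinearMap * weylMonomial R a b =
      weylMonomial R a (b + Finsupp.single i 1) +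
        (a i : R) • weylMonomial R (a - Finsupp.single i 1) b := by
  refine linearMap_ext fun t => LinearMap.ext_ring ?_
  simp only [LinearMap.comp_apply, Module.End.mul_apply, LinearMap.add_apply,
    LinearMap.smul_apply, Derivation.coeFn_coe, weylMonomial_monomial, pderiv_monomial, one_mul,
    smul_monomial, smul_eq_mul]
  by_cases h : b ≤ t
  · have hcast : (((t + a - b) i : ℕ) : R) = t i + a i - b i := by
      rw [Finsupp.tsub_apply, Finsupp.add_apply, Nat.cast_sub (le_add_right (h i))]
      push_cast
      ring
    rw [fallingCoeff_add_single, tsub_add_eq_tsub_tsub, hcast]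
    rcases eq_or_ne (a i) 0 with ha | ha
    · simp only [ha, Nat.cast_zero, zero_mul, monomial_zero, add_zero]
    · have hexp : t + (a - Finsupp.single i 1) - b = t + a - b - Finsupp.single i 1 := by
        ext j
        have := h j
        rcases eq_or_ne j i with rfl | hj <;> simp [*]; omega
      rw [hexp, ← map_add]
      congr 1
      ring
  · have h' : ¬b + Finsupp.single i 1 ≤ t := fun h' => h (le_trans le_self_add h')
    simp [fallingCoeff_natCast_of_not_le h, fallingCoeff_natCast_of_not_le h']

lemma weylMonomial_add_single_add_single (i : σ) (a b : σ →₀ ℕ) :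
    weylMonomial R (a + Finsupp.single i 1) (b + Finsupp.single i 1) =
      weylMonomial R a b * (LinearMap.mulLeft R (X i) * (pderiv i).toLinearMap) -
        (b i : R) • weylMonomial R a b := by
  refine linearMap_ext fun t => LinearMap.ext_ring ?_
  simp only [LinearMap.comp_apply, Module.End.mul_apply, LinearMap.sub_apply,
    LinearMap.smul_apply, LinearMap.mulLeft_apply, Derivation.coeFn_coe, weylMonomial_monomial,
    pderiv_monomial, X, monomial_mul, one_mul, smul_monomial, smul_eq_mul,
    fallingCoeff_add_single]
  rw [← add_assoc, add_tsub_add_eq_tsub_right]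
  rcases eq_or_ne (t i) 0 with ht | ht
  · simp [ht, mul_comm]
  · rw [add_tsub_cancel_of_le (Finsupp.single_le_iff.2 (Nat.one_le_iff_ne_zero.2 ht)),
      ← map_sub]
    congr 1
    ring

/-- Applying the operators to `z^b` with `b` minimal among the `∂`-exponents that occur isolates
the terms with `∂`-exponent `b`, which act by `b! z^a`. -/
lemma linearIndependent_weylMonomial [IsDomain R] [CharZero R] :
    LinearIndependent R fun p : (σ →₀ ℕ) × (σ →₀ ℕ) => weylMonomial R p.1 p.2 := by
  classical
  refine linearIndependent_iff.2 fun l hl => ?_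
  by_contra hl0
  obtain ⟨b₀, ⟨a₀, hp₀⟩, hmin⟩ := exists_minimal_of_wellFoundedLT
    (fun b => ∃ a, (a, b) ∈ l.support)
    (let ⟨⟨a, b⟩, h⟩ := Finsupp.support_nonempty_iff.2 hl0; ⟨b, a, h⟩)
  have hcoeff := congr_arg (fun f => coeff a₀ (f (monomial b₀ 1))) hl
  simp only [Finsupp.linearCombination_apply, Finsupp.sum, LinearMap.sum_apply, coeff_sum,
    LinearMap.zero_apply, coeff_zero] at hcoeff
  rw [Finset.sum_eq_single_of_mem _ hp₀] at hcoeff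
  · simp only [LinearMap.smul_apply, weylMonomial_monomial, add_tsub_cancel_left, smul_monomial,
      coeff_monomial, if_true, smul_eq_mul, one_mul] at hcoeff
    exact Finsupp.mem_support_iff.1 hp₀
      ((mul_eq_zero.1 hcoeff).resolve_right (fallingCoeff_natCast_self_ne_zero b₀))
  · rintro ⟨a, b⟩ hp hne
    simp only [LinearMap.smul_apply, weylMonomial_monomial, smul_monomial, coeff_monomial]
    by_cases hb : b ≤ b₀
    · obtain rfl : b = b₀ := le_antisymm hb (hmin ⟨a, hp⟩ hb)
      rw [add_tsub_cancel_left, if_neg fun h => hne (by rw [h])]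
    · simp [fallingCoeff_natCast_of_not_le hb]

end WeylMonomial

lemma weylMonomial_mem_weyl {n : ℕ} (a b : Fin n →₀ ℕ) : weylMonomial ℂ a b ∈ Weyl n := by
  induction a using Finsupp.induction_add_single_one with
  | zero =>
    induction b using Finsupp.induction_add_single_one with
    | zero => exact weylMonomial_zero_zero (σ := Fin n) (R := ℂ) ▸ one_mem _
    | add_single i b ih =>
      have h := pderiv_mul_weylMonomial (R := ℂ) i 0 b
      rw [Finsupp.coe_zero, Pi.zero_apply, Nat.cast_zero, zero_smul, add_zero] at h
      exact h ▸ mul_mem (dW n i).2 ih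
  | add_single i a ih => exact mulLeft_X_mul_weylMonomial (R := ℂ) i a b ▸ mul_mem (zW n i).2 ih

namespace Weyl

variable {n : ℕ}

noncomputable def monomial (a b : Fin n →₀ ℕ) : Weyl n :=
  ⟨weylMonomial ℂ a b, weylMonomial_mem_weyl a b⟩

lemma monomial_zero_zero : monomial (0 : Fin n →₀ ℕ) 0 = 1 :=
  Subtype.ext weylMonomial_zero_zero

lemma zW_mul_monomial (i : Fin n) (a b : Fin n →₀ ℕ) :
    zW n i * monomial a b = monomial (a + Finsupp.single i 1) b :=
  Subtype.ext (mulLeft_X_mul_weylMonomial i a b)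

lemma dW_mul_monomial (i : Fin n) (a b : Fin n →₀ ℕ) :
    dW n i * monomial a b =
      monomial a (b + Finsupp.single i 1) + (a i : ℂ) • monomial (a - Finsupp.single i 1) b :=
  Subtype.ext (pderiv_mul_weylMonomial i a b)

lemma monomial_add_single_add_single (i : Fin n) (a b : Fin n →₀ ℕ) :
    monomial (a + Finsupp.single i 1) (b + Finsupp.single i 1) =
      monomial a b * (zW n i * dW n i) - (b i : ℂ) • monomial a b :=
  Subtype.ext (weylMonomial_add_single_add_single i a b)

lemma zW_mul_dW (i : Fin n) :
    zW n i * dW n i = monomial (Finsupp.single i 1) (Finsupp.single i 1) := by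
  simpa [monomial_zero_zero] using (monomial_add_single_add_single i 0 0).symm

lemma mul_mem_of_forall_generator_mul_mem {K : Submodule ℂ (Weyl n)}
    (hz : ∀ i, ∀ x ∈ K, zW n i * x ∈ K) (hd : ∀ i, ∀ x ∈ K, dW n i * x ∈ K)
    (T : Weyl n) {x : Weyl n} (hx : x ∈ K) : T * x ∈ K := by
  obtain ⟨T, hT⟩ := T
  induction hT using Algebra.adjoin_induction generalizing x with
  | mem T hT =>
    rcases hT with ⟨i, rfl⟩ | ⟨i, rfl⟩
    exacts [hz i x hx, hd i x hx]
  | algebraMap r => exact (Algebra.smul_def r x).symm ▸ K.smul_mem r hx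
  | add T S hT hS ihT ihS =>
    exact (add_mul (⟨T, hT⟩ : Weyl n) ⟨S, hS⟩ x) ▸ K.add_mem (ihT hx) (ihS hx)
  | mul T S hT hS ihT ihS => exact (mul_assoc (⟨T, hT⟩ : Weyl n) ⟨S, hS⟩ x) ▸ ihT (ihS hx)

lemma span_monomial :
    Submodule.span ℂ (Set.range fun p : (Fin n →₀ ℕ) × (Fin n →₀ ℕ) => monomial p.1 p.2) = ⊤ := by
  set K := Submodule.span ℂ (Set.range fun p : (Fin n →₀ ℕ) × (Fin n →₀ ℕ) => monomial p.1 p.2)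
  have hmem : ∀ a b, monomial a b ∈ K := fun a b => Submodule.subset_span ⟨(a, b), rfl⟩
  have stable : ∀ T : Weyl n, (∀ a b, T * monomial a b ∈ K) → ∀ x ∈ K, T * x ∈ K :=
    fun T hT x hx => (Submodule.span_le (p := K.comap (LinearMap.mulLeft ℂ T))).2
      (by rintro _ ⟨p, rfl⟩; exact hT p.1 p.2) hx
  refine Submodule.eq_top_iff'.2 fun T => mul_one T ▸ mul_mem_of_forall_generator_mul_mem
    (fun i => stable _ fun a b => ?_) (fun i => stable _ fun a b => ?_) T
    (monomial_zero_zero (n := n) ▸ hmem 0 0)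
  · exact zW_mul_monomial i a b ▸ hmem _ _
  · exact dW_mul_monomial i a b ▸ K.add_mem (hmem _ _) (K.smul_mem _ (hmem _ _))

noncomputable def basis : Module.Basis ((Fin n →₀ ℕ) × (Fin n →₀ ℕ)) ℂ (Weyl n) :=
  .mk (v := fun p => monomial p.1 p.2)
    (.of_comp (Weyl n).val.toLinearMap linearIndependent_weylMonomial) span_monomial.ge

lemma basis_apply (p : (Fin n →₀ ℕ) × (Fin n →₀ ℕ)) : basis p = monomial p.1 p.2 :=
  Module.Basis.mk_apply _ _ _

end Weyl

/-- `Finsupp.single m c` stands for `c • z^(m - α)`. -/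
abbrev TwistedLaurent (n : ℕ) := (Fin n →₀ ℤ) →₀ ℂ

namespace TwistedLaurent

variable {n : ℕ}

noncomputable def shift (i : Fin n) : TwistedLaurent n →ₗ[ℂ] TwistedLaurent n :=
  Finsupp.lmapDomain ℂ ℂ (· + Finsupp.single i 1)

lemma shift_injective (i : Fin n) : Function.Injective (shift i) :=
  Finsupp.mapDomain_injective (add_left_injective _)

noncomputable def partialDeriv (α : Fin n → ℂ) (i : Fin n) :
    TwistedLaurent n →ₗ[ℂ] TwistedLaurent n :=
  Finsupp.lsum ℂ fun m => LinearMap.toSpanSingleton ℂ _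
    (Finsupp.single (m - Finsupp.single i 1) ((m i : ℂ) - α i))

lemma partialDeriv_single (α : Fin n → ℂ) (i : Fin n) (m : Fin n →₀ ℤ) (c : ℂ) :
    partialDeriv α i (Finsupp.single m c) =
      Finsupp.single (m - Finsupp.single i 1) (c * ((m i : ℂ) - α i)) := by
  rw [partialDeriv, Finsupp.lsum_single, LinearMap.toSpanSingleton_apply, Finsupp.smul_single,
    smul_eq_mul]

end TwistedLaurent

namespace Weyl

open TwistedLaurent

variable {n : ℕ} (α : Fin n → ℂ)

/-- `T ↦ T • z^(-α)`, read off the basis: `∂^b z^(-α) = (-α)_b z^(-b - α)`. -/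
noncomputable def actOnPower : Weyl n →ₗ[ℂ] TwistedLaurent n :=
  basis.constr ℂ fun p => Finsupp.single
    (Finsupp.intCastHom _ p.1 - Finsupp.intCastHom _ p.2) (fallingCoeff (-α) p.2)

lemma actOnPower_monomial (a b : Fin n →₀ ℕ) :
    actOnPower α (monomial a b) = Finsupp.single
      (Finsupp.intCastHom _ a - Finsupp.intCastHom _ b) (fallingCoeff (-α) b) := by
  rw [← basis_apply (a, b), actOnPower, Module.Basis.constr_basis]

lemma actOnPower_zW_mul (i : Fin n) (x : Weyl n) :
    actOnPower α (zW n i * x) = shift i (actOnPower α x) := by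
  change ((actOnPower α).comp (LinearMap.mulLeft ℂ (zW n i))) x
    = ((shift i).comp (actOnPower α)) x
  congr 1
  refine basis.ext fun p => ?_
  simp only [LinearMap.comp_apply, LinearMap.mulLeft_apply, basis_apply, zW_mul_monomial,
    actOnPower_monomial, shift, Finsupp.lmapDomain_apply, Finsupp.mapDomain_single, map_add,
    Finsupp.intCastHom_single, Nat.cast_one]
  congr 1
  abel

lemma actOnPower_dW_mul (i : Fin n) (x : Weyl n) :
    actOnPower α (dW n i * x) = partialDeriv α i (actOnPower α x) := by
  change ((actOnPower α).comp (LinearMap.mulLeft ℂ (dW n i))) x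
    = ((partialDeriv α i).comp (actOnPower α)) x
  congr 1
  refine basis.ext fun ⟨a, b⟩ => ?_
  simp only [LinearMap.comp_apply, LinearMap.mulLeft_apply, basis_apply, dW_mul_monomial,
    map_add, map_smul, actOnPower_monomial, partialDeriv_single, fallingCoeff_add_single,
    Finsupp.smul_single, smul_eq_mul, Finsupp.intCastHom_single, Nat.cast_one, ← sub_sub,
    Pi.neg_apply]
  have hcoeff : (((Finsupp.intCastHom _ a - Finsupp.intCastHom _ b) i : ℤ) : ℂ) = a i - b i := by
    simp
  rw [hcoeff]
  rcases eq_or_ne (a i) 0 with ha | ha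
  · rw [ha, Nat.cast_zero, zero_mul, Finsupp.single_zero, add_zero]
    congr 1
    ring
  · rw [Finsupp.intCastHom_tsub_single ha, sub_right_comm _ (Finsupp.single i 1 : Fin n →₀ ℤ),
      ← Finsupp.single_add]
    congr 1
    ring

lemma actOnPower_mul_eq_zero (T : Weyl n) {x : Weyl n} (hx : actOnPower α x = 0) :
    actOnPower α (T * x) = 0 :=
  mul_mem_of_forall_generator_mul_mem (K := LinearMap.ker (actOnPower α))
    (fun i x hx => by simp_all [LinearMap.mem_ker, actOnPower_zW_mul])
    (fun i x hx => by simp_all [LinearMap.mem_ker, actOnPower_dW_mul]) T hx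

noncomputable def eulerIdeal : Submodule (Weyl n) (Weyl n) :=
  Submodule.span (Weyl n) (Set.range fun i => zW n i * dW n i + algebraMap ℂ (Weyl n) (α i))

lemma actOnPower_eq_zero_of_mem_eulerIdeal {x : Weyl n} (hx : x ∈ eulerIdeal α) :
    actOnPower α x = 0 := by
  refine Submodule.span_induction ?_ (map_zero _)
    (fun x y _ _ hx hy => by rw [map_add, hx, hy, add_zero])
    (fun T x _ hx => actOnPower_mul_eq_zero α T hx) hx
  rintro _ ⟨i, rfl⟩
  rw [map_add, zW_mul_dW, Algebra.algebraMap_eq_smul_one, map_smul, ← monomial_zero_zero,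
    actOnPower_monomial, actOnPower_monomial, fallingCoeff_single]
  simp

def disjointPairs (n : ℕ) : Set ((Fin n →₀ ℕ) × (Fin n →₀ ℕ)) :=
  {p | ∀ i, p.1 i = 0 ∨ p.2 i = 0}

noncomputable def normalSpan (n : ℕ) : Submodule ℂ (Weyl n) :=
  Submodule.span ℂ ((fun p => monomial p.1 p.2) '' disjointPairs n)

lemma monomial_add_add_mem_normalSpan_sup (c : Fin n →₀ ℕ) {p} (hp : p ∈ disjointPairs n) :
    monomial (p.1 + c) (p.2 + c) ∈ normalSpan n ⊔ (eulerIdeal α).restrictScalars ℂ := by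
  induction c using Finsupp.induction_add_single_one with
  | zero => exact Submodule.mem_sup_left (Submodule.subset_span ⟨p, hp, by simp⟩)
  | add_single i c ih =>
    set x := monomial (p.1 + c) (p.2 + c)
    have hgen : x * (zW n i * dW n i + algebraMap ℂ (Weyl n) (α i)) ∈ eulerIdeal α :=
      (eulerIdeal α).smul_mem x (Submodule.subset_span ⟨i, rfl⟩)
    have hred : monomial (p.1 + (c + Finsupp.single i 1)) (p.2 + (c + Finsupp.single i 1)) =
        x * (zW n i * dW n i + algebraMap ℂ (Weyl n) (α i)) - (α i + (p.2 + c) i) • x := by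
      rw [← add_assoc, ← add_assoc, monomial_add_single_add_single, mul_add,
        ← Algebra.commutes, ← Algebra.smul_def, add_smul]
      abel
    rw [hred]
    exact sub_mem (Submodule.mem_sup_right hgen) (Submodule.smul_mem _ _ ih)

lemma mem_normalSpan_sup_eulerIdeal (x : Weyl n) :
    x ∈ normalSpan n ⊔ (eulerIdeal α).restrictScalars ℂ := by
  refine Submodule.span_le.2 ?_ (span_monomial.ge (Submodule.mem_top (x := x)))
  rintro _ ⟨⟨a, b⟩, rfl⟩
  have hp : (a - a ⊓ b, b - a ⊓ b) ∈ disjointPairs n := fun i => by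
    simp only [Finsupp.tsub_apply, Finsupp.inf_apply]
    omega
  simpa [tsub_add_cancel_of_le] using monomial_add_add_mem_normalSpan_sup α (a ⊓ b) hp

/-- `z^(m - α) ↦ (-α)_(m⁻)⁻¹ z^(m⁺) ∂^(m⁻)`, a left inverse of `actOnPower α` on `normalSpan n`. -/
noncomputable def ofTwistedLaurent : TwistedLaurent n →ₗ[ℂ] Weyl n :=
  Finsupp.lsum ℂ fun m => LinearMap.toSpanSingleton ℂ (Weyl n)
    ((fallingCoeff (-α) ((-m).mapRange Int.toNat rfl))⁻¹ •
      monomial (m.mapRange Int.toNat rfl) ((-m).mapRange Int.toNat rfl))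

lemma ofTwistedLaurent_actOnPower_monomial (hα : ∀ i : Fin n, ∀ k : ℕ, α i ≠ -(k : ℂ))
    {p : (Fin n →₀ ℕ) × (Fin n →₀ ℕ)} (hp : p ∈ disjointPairs n) :
    ofTwistedLaurent α (actOnPower α (monomial p.1 p.2)) = monomial p.1 p.2 := by
  have hpos :
      (Finsupp.intCastHom _ p.1 - Finsupp.intCastHom _ p.2).mapRange Int.toNat rfl = p.1 := by
    ext j
    have := hp j
    simp only [Finsupp.mapRange_apply, Finsupp.coe_sub, Pi.sub_apply, Finsupp.intCastHom_apply]
    omega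
  have hneg :
      (-(Finsupp.intCastHom _ p.1 - Finsupp.intCastHom _ p.2)).mapRange Int.toNat rfl = p.2 := by
    ext j
    have := hp j
    simp only [Finsupp.mapRange_apply, Finsupp.coe_neg, Finsupp.coe_sub, Pi.neg_apply,
      Pi.sub_apply, Finsupp.intCastHom_apply]
    omega
  rw [actOnPower_monomial, ofTwistedLaurent, Finsupp.lsum_single,
    LinearMap.toSpanSingleton_apply, hpos, hneg, smul_smul,
    mul_inv_cancel₀ (fallingCoeff_neg_ne_zero hα p.2), one_smul]

lemma eq_zero_of_mem_normalSpan_of_actOnPower_eq_zero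
    (hα : ∀ i : Fin n, ∀ k : ℕ, α i ≠ -(k : ℂ)) {x : Weyl n} (hx : x ∈ normalSpan n)
    (h : actOnPower α x = 0) : x = 0 := by
  have hinv : ((ofTwistedLaurent α).comp (actOnPower α)) x = LinearMap.id (R := ℂ) x :=
    LinearMap.eqOn_span'
      (by rintro _ ⟨p, hp, rfl⟩; exact ofTwistedLaurent_actOnPower_monomial α hα hp) hx
  simpa [h] using hinv.symm

lemma mem_eulerIdeal_iff_actOnPower_eq_zero (hα : ∀ i : Fin n, ∀ k : ℕ, α i ≠ -(k : ℂ))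
    {x : Weyl n} : x ∈ eulerIdeal α ↔ actOnPower α x = 0 := by
  refine ⟨actOnPower_eq_zero_of_mem_eulerIdeal α, fun hx => ?_⟩
  obtain ⟨u, hu, w, hw, rfl⟩ := Submodule.mem_sup.1 (mem_normalSpan_sup_eulerIdeal α x)
  have hu0 : u = 0 := eq_zero_of_mem_normalSpan_of_actOnPower_eq_zero α hα hu <| by
    rwa [map_add, actOnPower_eq_zero_of_mem_eulerIdeal α hw, add_zero] at hx
  rwa [hu0, zero_add]

end Weyl

/-- Let `M = D/∑ᵢ D·(zᵢ∂ᵢ + αᵢ)` with all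
`αᵢ ∉ {0,−1,−2,…}`. Then for each `i`, multiplication by `zᵢ` is injective
on `M`. -/
theorem z_mul_injective_on_quotient (n : ℕ) (α : Fin n → ℂ)
    (hα : ∀ i : Fin n, ∀ k : ℕ, α i ≠ -(k : ℂ)) (i₀ : Fin n) :
    Function.Injective
      (fun m : Weyl n ⧸ Submodule.span (Weyl n)
          (Set.range fun i => zW n i * dW n i + algebraMap ℂ (Weyl n) (α i)) =>
        zW n i₀ • m) := by
  rintro ⟨d₁⟩ ⟨d₂⟩ h
  have hz : zW n i₀ * (d₁ - d₂) ∈ Weyl.eulerIdeal α := by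
    rw [mul_sub]
    exact (Submodule.Quotient.eq _).1 h
  rw [Weyl.mem_eulerIdeal_iff_actOnPower_eq_zero α hα, Weyl.actOnPower_zW_mul] at hz
  refine (Submodule.Quotient.eq _).2 ((Weyl.mem_eulerIdeal_iff_actOnPower_eq_zero α hα).2 ?_)
  exact TwistedLaurent.shift_injective i₀ (hz.trans (map_zero _).symm)
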